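/- arXiv:2012.07168 — 3 statements merged into one kernel-verified Lean document; each statement's English description precedes it below -/
import Mathlib

section
/- Define gf(a,b,c,d) to be the generating function of all lattice paths from (a,b) to (c,d) in Z x Z using unit steps to the right and downward, where a right step from (u,v) to (u+1,v) has weight (X q^{u-2v} + Y q^{2v-u})/2 and each down step has weight 1. Then for a \le c and b \ge d, gf(a,b,c,d) = \prod_{j=1}^{c-a} ( (X q^{j-1-2b+a} + Y q^{-j+1+2d-a}) (1 - q^{2(b-d)+2j}) ) / ( 2 (1 - q^{2j}) ), and gf(a,b,c,d) = 0 if a > c or b < d. -/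
/-- The field of rational functions in the three indeterminates `X`, `Y`, `q`. -/
noncomputable abbrev MyF : Type := FractionRing (MvPolynomial (Fin 3) ℚ)

/-- The indeterminate `X`. -/
noncomputable def Xv : MyF := algebraMap (MvPolynomial (Fin 3) ℚ) MyF (MvPolynomial.X 0)
/-- The indeterminate `Y`. -/
noncomputable def Yv : MyF := algebraMap (MvPolynomial (Fin 3) ℚ) MyF (MvPolynomial.X 1)
/-- The indeterminate `q`. -/
noncomputable def qv : MyF := algebraMap (MvPolynomial (Fin 3) ℚ) MyF (MvPolynomial.X 2)

/-- The weight of a lattice path (encoded as a list of steps, `true` = right step,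
`false` = down step) starting at a given point: a right step from `(u,v)` to `(u+1,v)`
has weight `(X q^{u-2v} + Y q^{2v-u})/2`, a down step has weight `1`, and the weight
of the path is the product of the weights of its steps. -/
noncomputable def pathWeight (X Y q : MyF) : ℤ × ℤ → List Bool → MyF
  | _, [] => 1
  | p, true :: s =>
      (X * q ^ (p.1 - 2 * p.2) + Y * q ^ (2 * p.2 - p.1)) / 2 *
        pathWeight X Y q (p.1 + 1, p.2) s
  | p, false :: s => pathWeight X Y q (p.1, p.2 - 1) s

/-- The endpoint of a lattice path (list of steps) starting at a given point. -/
def endpt : ℤ × ℤ → List Bool → ℤ × ℤ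
  | p, [] => p
  | p, true :: s => endpt (p.1 + 1, p.2) s
  | p, false :: s => endpt (p.1, p.2 - 1) s

/-- `gf X Y q a b c d` is the generating function of all lattice paths from `(a,b)`
to `(c,d)` with unit steps to the right and downwards, weighted as in `pathWeight`.
(Any such path has exactly `c-a` right steps and `b-d` down steps, hence length
`(c-a)+(b-d)`; the sum ranges over all step sequences of that length ending at
`(c,d)`.  In particular `gf X Y q a b c d = 0` when `a > c` or `b < d`.) -/
noncomputable def gf (X Y q : MyF) (a b c d : ℤ) : MyF :=
  ∑ s : Fin ((c - a) + (b - d)).toNat → Bool,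
    if endpt (a, b) (List.ofFn s) = (c, d) then pathWeight X Y q (a, b) (List.ofFn s) else 0

/-!
Splitting off the last step of a path gives the recurrence
`gf(a,b,c,d) = gf(a,b,c-1,d) · w(c-1,d) + gf(a,b,c,d+1)`, `w` the weight of a right step, with
`gf(a,b,a,b) = 1` and `gf = 0` outside the quadrant `a ≤ c, d ≤ b`. The product satisfies the same
recurrence and boundary conditions: after shifting the index of the product for `d + 1` (its
`(t+1)`-st numerator is `q` times the `t`-th one for `d`), the recurrence reduces to one identity
for the last numerator, `num_d(k) = w(a+k,d) · den(k) + q^k · num_{d+1}(0)`. This uses that `q` is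
nonzero and not a root of unity, so that the denominators `2(1 - q^{2j})` do not vanish.
-/

open Finset

section ClosedForm

variable {K : Type*} [Field K] (X Y q : K)

noncomputable def rightStepWeight (p : ℤ × ℤ) : K :=
  (X * q ^ (p.1 - 2 * p.2) + Y * q ^ (2 * p.2 - p.1)) / 2

def gfProdNum (a b d : ℤ) (t : ℕ) : K :=
  (X * q ^ ((t : ℤ) + 1 - 1 - 2 * b + a) + Y * q ^ (-((t : ℤ) + 1) + 1 + 2 * d - a)) *
    (1 - q ^ (2 * (b - d) + 2 * ((t : ℤ) + 1)))

def gfProdDen (t : ℕ) : K := 2 * (1 - q ^ (2 * ((t : ℤ) + 1)))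

def gfProd (a b c d : ℤ) : K :=
  ∏ t ∈ range (c - a).toNat, gfProdNum X Y q a b d t / gfProdDen q t

variable {X Y q}

lemma gfProdNum_succ (hq : q ≠ 0) (a b d : ℤ) (t : ℕ) :
    gfProdNum X Y q a b (d + 1) (t + 1) = q * gfProdNum X Y q a b d t := by
  simp only [gfProdNum, Nat.cast_add, Nat.cast_one, zpow_add₀ hq, zpow_sub₀ hq, zpow_neg,
    zpow_mul' _ 2, zpow_natCast, zpow_ofNat]
  field_simp

lemma gfProdNum_eq [NeZero (2 : K)] (hq : q ≠ 0) (a b d : ℤ) (k : ℕ) :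
    gfProdNum X Y q a b d k =
      rightStepWeight X Y q (a + k, d) * gfProdDen q k + q ^ k * gfProdNum X Y q a b (d + 1) 0 := by
  simp only [gfProdNum, gfProdDen, rightStepWeight, Nat.cast_zero, zpow_add₀ hq, zpow_sub₀ hq,
    zpow_neg, zpow_mul' _ 2, zpow_natCast, zpow_ofNat]
  field_simp
  ring

lemma gfProdDen_ne_zero [NeZero (2 : K)] (hq : ¬IsOfFinOrder q) (t : ℕ) : gfProdDen q t ≠ 0 := by
  refine mul_ne_zero two_ne_zero (sub_ne_zero.mpr fun h => hq ?_)
  refine isOfFinOrder_iff_pow_eq_one.mpr ⟨2 * (t + 1), by omega, ?_⟩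
  exact_mod_cast h.symm

lemma gfProd_of_le (a b c d : ℤ) (h : c ≤ a) : gfProd X Y q a b c d = 1 := by
  rw [gfProd, Int.toNat_of_nonpos (by omega), prod_range_zero]

lemma gfProd_eq_zero (a b c : ℤ) (h : a < c) : gfProd X Y q a b c (b + 1) = 0 := by
  refine prod_eq_zero (i := 0) (mem_range.mpr (by omega)) ?_
  simp [gfProdNum]

theorem gfProd_recurrence [NeZero (2 : K)] (hq0 : q ≠ 0) (hq : ¬IsOfFinOrder q) (a b c d : ℤ)
    (h : a < c) :
    gfProd X Y q a b c d =
      gfProd X Y q a b (c - 1) d * rightStepWeight X Y q (c - 1, d) + gfProd X Y q a b c (d + 1) := by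
  obtain ⟨k, hk⟩ : ∃ k : ℕ, c - a = k + 1 := ⟨(c - a - 1).toNat, by omega⟩
  have hc : c - 1 = a + k := by omega
  simp only [gfProd, prod_div_distrib, hc, show (a + k - a).toNat = k by omega, hk,
    show ((k : ℤ) + 1).toNat = k + 1 by omega]
  rw [prod_range_succ, prod_range_succ, prod_range_succ', gfProdNum_eq hq0 _ _ _ k]
  simp only [gfProdNum_succ hq0, prod_mul_distrib, prod_const, card_range]
  have hden := prod_ne_zero_iff.mpr fun t (_ : t ∈ range k) => gfProdDen_ne_zero hq t
  have hdenk := gfProdDen_ne_zero hq k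
  field_simp

end ClosedForm

section Paths

lemma endpt_append (p : ℤ × ℤ) (l l' : List Bool) : endpt p (l ++ l') = endpt (endpt p l) l' := by
  induction l generalizing p with
  | nil => rfl
  | cons x l ih => cases x <;> simp [endpt, ih]

lemma le_fst_endpt_and_snd_endpt_le (p : ℤ × ℤ) (l : List Bool) :
    p.1 ≤ (endpt p l).1 ∧ (endpt p l).2 ≤ p.2 := by
  induction l generalizing p with
  | nil => simp [endpt]
  | cons x l ih =>
    cases x <;> simp only [endpt] <;> constructor <;>
      linarith [ih (p.1 + 1, p.2), ih (p.1, p.2 - 1)]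

variable (X Y q : MyF)

lemma pathWeight_append (p : ℤ × ℤ) (l l' : List Bool) :
    pathWeight X Y q p (l ++ l') = pathWeight X Y q p l * pathWeight X Y q (endpt p l) l' := by
  induction l generalizing p with
  | nil => simp [pathWeight, endpt]
  | cons x l ih => cases x <;> simp [pathWeight, endpt, ih, mul_assoc]

-- `gf X Y q a b c d` is `pathSum X Y q (a, b) (c, d) ((c - a) + (b - d)).toNat` by definition.
noncomputable def pathSum (p e : ℤ × ℤ) (N : ℕ) : MyF :=
  ∑ s : Fin N → Bool, if endpt p (List.ofFn s) = e then pathWeight X Y q p (List.ofFn s) else 0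

lemma sum_ofFn_succ {α M : Type*} [Fintype α] [AddCommMonoid M] (f : List α → M) (N : ℕ) :
    ∑ s : Fin (N + 1) → α, f (List.ofFn s) = ∑ s : Fin N → α, ∑ x, f (List.ofFn s ++ [x]) := by
  rw [← (Fin.snocEquiv fun _ => α).sum_comp, Fintype.sum_prod_type_right]
  simp [-List.ofFn_succ, List.ofFn_succ_last]

lemma pathSum_zero_self (p : ℤ × ℤ) : pathSum X Y q p p 0 = 1 := by
  simp [pathSum, endpt, pathWeight]

lemma pathSum_eq_zero {p e : ℤ × ℤ} (h : ¬(p.1 ≤ e.1 ∧ e.2 ≤ p.2)) (N : ℕ) :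
    pathSum X Y q p e N = 0 := by
  refine sum_eq_zero fun s _ => if_neg fun he => h ?_
  simpa [he] using le_fst_endpt_and_snd_endpt_le p (List.ofFn s)

lemma pathSum_succ (p e : ℤ × ℤ) (N : ℕ) :
    pathSum X Y q p e (N + 1) =
      pathSum X Y q p (e.1 - 1, e.2) N * rightStepWeight X Y q (e.1 - 1, e.2) +
        pathSum X Y q p (e.1, e.2 + 1) N := by
  simp only [pathSum]
  rw [sum_ofFn_succ (fun l => if endpt p l = e then pathWeight X Y q p l else 0), sum_mul,
    ← sum_add_distrib]
  refine sum_congr rfl fun s _ => ?_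
  simp only [Fintype.sum_bool, endpt_append, pathWeight_append]
  obtain ⟨u, v⟩ := endpt p (List.ofFn s)
  obtain ⟨c, d⟩ := e
  simp only [endpt, pathWeight, Prod.mk.injEq, eq_sub_iff_add_eq, sub_eq_iff_eq_add, mul_one]
  congr 1
  split_ifs with h
  · obtain ⟨rfl, rfl⟩ := h
    simp [rightStepWeight]
  · rw [zero_mul]

end Paths

theorem pathSum_eq_gfProd {X Y q : MyF} (hq0 : q ≠ 0) (hq : ¬IsOfFinOrder q) (a b : ℤ) (N : ℕ) :
    ∀ c d, a ≤ c → d ≤ b → (c - a) + (b - d) = N →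
      pathSum X Y q (a, b) (c, d) N = gfProd X Y q a b c d := by
  induction N with
  | zero =>
    intro c d hac hdb hN
    obtain ⟨rfl, rfl⟩ : c = a ∧ d = b := by omega
    rw [pathSum_zero_self, gfProd_of_le _ _ _ _ le_rfl]
  | succ k ih =>
    intro c d hac hdb hN
    rw [pathSum_succ]
    rcases hac.eq_or_lt with rfl | hac
    · rw [pathSum_eq_zero _ _ _ (by simp), zero_mul, zero_add, ih _ _ le_rfl (by omega) (by omega),
        gfProd_of_le _ _ _ _ le_rfl, gfProd_of_le _ _ _ _ le_rfl]
    have hdown : pathSum X Y q (a, b) (c, d + 1) k = gfProd X Y q a b c (d + 1) := by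
      rcases hdb.eq_or_lt with rfl | hdb
      · rw [pathSum_eq_zero _ _ _ (by simp), gfProd_eq_zero _ _ _ hac]
      · exact ih _ _ hac.le hdb (by omega)
    rw [ih _ _ (by omega) hdb (by omega), hdown]
    exact (gfProd_recurrence hq0 hq a b c d hac).symm

lemma qv_ne_zero : qv ≠ 0 :=
  (map_ne_zero_iff _ (IsFractionRing.injective _ _)).mpr (MvPolynomial.X_ne_zero _)

lemma not_isOfFinOrder_qv : ¬IsOfFinOrder qv := by
  intro h
  obtain ⟨n, hn, h⟩ := isOfFinOrder_iff_pow_eq_one.mp h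
  rw [qv, ← map_pow, ← map_one (algebraMap (MvPolynomial (Fin 3) ℚ) MyF),
    (IsFractionRing.injective _ _).eq_iff] at h
  simpa [hn.ne'] using congrArg (MvPolynomial.eval 0) h

/-- For `a ≤ c` and `b ≥ d`, the lattice-path generating function is
`gf(a,b,c,d) = ∏_{j=1}^{c-a} ((X q^{j-1-2b+a} + Y q^{-j+1+2d-a})(1-q^{2(b-d)+2j}))/(2(1-q^{2j}))`,
and `gf(a,b,c,d) = 0` if `a > c` or `b < d`. -/
theorem gf_eval (a b c d : ℤ) :
    (a ≤ c → d ≤ b →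
      gf Xv Yv qv a b c d =
        ∏ t ∈ Finset.range (c - a).toNat,
          ((Xv * qv ^ ((t : ℤ) + 1 - 1 - 2 * b + a) + Yv * qv ^ (-((t : ℤ) + 1) + 1 + 2 * d - a)) *
              (1 - qv ^ (2 * (b - d) + 2 * ((t : ℤ) + 1)))) /
            (2 * (1 - qv ^ (2 * ((t : ℤ) + 1)))))
    ∧ (c < a ∨ b < d → gf Xv Yv qv a b c d = 0) := by
  refine ⟨fun hac hdb => ?_, fun h => pathSum_eq_zero _ _ _ (by omega) _⟩
  exact pathSum_eq_gfProd qv_ne_zero not_isOfFinOrder_qv a b _ c d hac hdb (by omega)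
end

section
/- The number of admissible sequences of length m-1 equals the Catalan number C_m = (1/(m+1)) * binomial(2m, m). -/
/-!
Number the steps of a Dyck word of semilength `n + 1` from `0`. Its last step is a down step at
position `2n + 1`; let `a₀ < ⋯ < a_{n-1}` be the positions of the other down steps. The prefix
ending at `a_i` contains `i + 1` down steps, so it has no more down than up steps exactly when
`2i + 1 ≤ a_i`. Hence admissible sequences of length `n` are the down-step positions of Dyck words
of semilength `n + 1`, which are counted by `catalan (n + 1)`.
-/

open Finset DyckStep

namespace DyckWord

variable {p : DyckWord} {n : ℕ}

lemma dropLast_append_D (hp : p ≠ 0) : p.toList.dropLast ++ [D] = p.toList := by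
  conv_rhs => rw [← List.dropLast_append_getLast (toList_ne_nil.mpr hp), getLast_eq_D]

lemma ne_zero_of_semilength_eq_succ (hp : p.semilength = n + 1) : p ≠ 0 := by
  rintro rfl
  simp at hp

lemma length_dropLast_of_semilength_eq_succ (hp : p.semilength = n + 1) :
    p.toList.dropLast.length = 2 * n + 1 := by
  rw [List.length_dropLast, ← p.two_mul_semilength_eq_length, hp]
  omega

end DyckWord

namespace AdmissibleSequence

def IsBallot (s : Finset ℕ) : Prop := ∀ t, 2 * #{x ∈ s | x < t} ≤ t

section StrictMono

variable {n : ℕ} {a : Fin n → ℕ}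

lemma card_filter_image_lt (ha : StrictMono a) (t : ℕ) :
    #{x ∈ univ.image a | x < t} = #{i | a i < t} := by
  rw [filter_image, card_image_of_injective _ ha.injective]

lemma isBallot_image_iff (ha : StrictMono a) :
    IsBallot (univ.image a) ↔ ∀ i : Fin n, 2 * (i : ℕ) + 1 ≤ a i := by
  simp only [IsBallot, card_filter_image_lt ha]
  refine ⟨fun h i ↦ ?_, fun h t ↦ ?_⟩
  · have hIic : ({j | a j < a i + 1} : Finset (Fin n)) = Iic i := by
      ext j
      simp [ha.le_iff_le]
    have := h (a i + 1)
    rw [hIic, Fin.card_Iic] at this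
    omega
  · have : #{i | a i < t} ≤ #(range (t / 2)) :=
      card_le_card_of_injOn (fun i ↦ (i : ℕ))
        (fun i hi ↦ by have := h i; simp at hi ⊢; omega) (fun i _ j _ ↦ Fin.ext)
    rw [card_range] at this
    omega

end StrictMono

abbrev Admissible (n : ℕ) : Type :=
  {a : Fin n → ℕ // StrictMono a ∧ ∀ i : Fin n, 2 * (i : ℕ) + 1 ≤ a i ∧ a i ≤ 2 * n}

/-- The down-step positions of a Dyck word of semilength `n + 1`, its final step left out. -/
def BallotSet (n : ℕ) : Type :=
  {s : Finset ℕ // s ⊆ range (2 * n + 1) ∧ #s = n ∧ IsBallot s}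

noncomputable def admissibleEquivBallotSet (n : ℕ) : Admissible n ≃ BallotSet n where
  toFun a :=
    ⟨univ.image a.1,
      fun x hx ↦ by
        obtain ⟨i, -, rfl⟩ := mem_image.mp hx
        simpa [Nat.lt_succ_iff] using (a.2.2 i).2,
      by rw [card_image_of_injective _ a.2.1.injective, card_univ, Fintype.card_fin],
      (isBallot_image_iff a.2.1).mpr fun i ↦ (a.2.2 i).1⟩
  invFun s :=
    have hball : IsBallot (univ.image (s.1.orderEmbOfFin s.2.2.1)) := by
      rw [image_orderEmbOfFin_univ]
      exact s.2.2.2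
    ⟨s.1.orderEmbOfFin s.2.2.1, (s.1.orderEmbOfFin s.2.2.1).strictMono, fun i ↦
      ⟨(isBallot_image_iff (OrderEmbedding.strictMono _)).mp hball i,
        by simpa [Nat.lt_succ_iff] using s.2.1 (orderEmbOfFin_mem s.1 s.2.2.1 i)⟩⟩
  left_inv a := Subtype.ext
    (orderEmbOfFin_unique _ (fun i ↦ mem_image_of_mem _ (mem_univ i)) a.2.1).symm
  right_inv s := Subtype.ext (image_orderEmbOfFin_univ _ _)

section Steps

def stepsWithDownAt (L : ℕ) (s : Finset ℕ) : List DyckStep :=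
  (List.range L).map fun j ↦ if j ∈ s then D else U

def downPositions (l : List DyckStep) : Finset ℕ := {j ∈ range l.length | l[j]? = some D}

variable {L t : ℕ} {s : Finset ℕ}

lemma count_U_add_count_D (l : List DyckStep) : l.count U + l.count D = l.length := by
  induction l with
  | nil => rfl
  | cons x l ih => cases x <;> simp <;> omega

lemma count_U_take (l : List DyckStep) (t : ℕ) :
    (l.take t).count U = min t l.length - (l.take t).count D := by
  have := count_U_add_count_D (l.take t)
  rw [List.length_take] at this
  omega

@[simp] lemma length_stepsWithDownAt : (stepsWithDownAt L s).length = L := by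
  simp [stepsWithDownAt]

lemma take_stepsWithDownAt : (stepsWithDownAt L s).take t = stepsWithDownAt (min t L) s := by
  rw [stepsWithDownAt, ← List.map_take, List.take_range, stepsWithDownAt]

lemma count_D_stepsWithDownAt : (stepsWithDownAt L s).count D = #{x ∈ s | x < L} := by
  have hD : ((· == D) ∘ fun j ↦ if j ∈ s then D else U) = fun j ↦ decide (j ∈ s) := by
    funext j
    by_cases hj : j ∈ s <;> simp [hj]
  rw [stepsWithDownAt, List.count_eq_countP, List.countP_map, hD, ← Nat.count,
    Nat.count_eq_card_filter_range, filter_mem_eq_inter, inter_comm, ← filter_mem_eq_inter]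
  simp

lemma count_D_take_stepsWithDownAt (hs : s ⊆ range L) :
    ((stepsWithDownAt L s).take t).count D = #{x ∈ s | x < t} := by
  rw [take_stepsWithDownAt, count_D_stepsWithDownAt]
  refine congrArg card (filter_congr fun x hx ↦ ?_)
  have := mem_range.mp (hs hx)
  omega

lemma downPositions_subset_range (l : List DyckStep) : downPositions l ⊆ range l.length :=
  filter_subset _ _

lemma stepsWithDownAt_downPositions (l : List DyckStep) :
    stepsWithDownAt l.length (downPositions l) = l := by
  refine List.ext_getElem (by simp) fun j _ hj ↦ ?_
  simp only [stepsWithDownAt, downPositions, List.getElem_map, List.getElem_range, mem_filter,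
    mem_range, List.getElem?_eq_getElem hj, hj, true_and, Option.some.injEq]
  cases l[j] <;> rfl

lemma downPositions_stepsWithDownAt (hs : s ⊆ range L) :
    downPositions (stepsWithDownAt L s) = s := by
  ext j
  have := @hs j
  by_cases hj : j ∈ s <;> simp_all [stepsWithDownAt, downPositions]

lemma count_D_take (l : List DyckStep) (t : ℕ) :
    (l.take t).count D = #{x ∈ downPositions l | x < t} := by
  conv_lhs => rw [← stepsWithDownAt_downPositions l]
  exact count_D_take_stepsWithDownAt (downPositions_subset_range l)

lemma count_D_eq_card_downPositions (l : List DyckStep) : l.count D = #(downPositions l) := by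
  have := count_D_take l l.length
  rwa [List.take_length,
    filter_true_of_mem fun x hx ↦ mem_range.mp (downPositions_subset_range l hx)] at this

end Steps

namespace BallotSet

variable {n : ℕ} (s : BallotSet n)

def steps : List DyckStep := stepsWithDownAt (2 * n + 1) s.1 ++ [D]

lemma count_D_stepsWithDownAt : (stepsWithDownAt (2 * n + 1) s.1).count D = n := by
  have := count_D_take_stepsWithDownAt (t := 2 * n + 1) s.2.1
  rwa [List.take_of_length_le (by simp), filter_true_of_mem fun x hx ↦ mem_range.mp (s.2.1 hx),
    s.2.2.1] at this

lemma count_D_steps : s.steps.count D = n + 1 := by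
  simp [steps, s.count_D_stepsWithDownAt]

lemma count_U_steps : s.steps.count U = n + 1 := by
  have := count_U_add_count_D (stepsWithDownAt (2 * n + 1) s.1)
  rw [s.count_D_stepsWithDownAt, length_stepsWithDownAt] at this
  simp [steps]
  omega

lemma count_D_take_steps_le_count_U (t : ℕ) :
    (s.steps.take t).count D ≤ (s.steps.take t).count U := by
  rcases le_or_gt t (2 * n + 1) with ht | ht
  · rw [steps, List.take_append_of_le_length (by simpa using ht), count_U_take,
      count_D_take_stepsWithDownAt s.2.1, length_stepsWithDownAt]
    have := s.2.2.2 t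
    omega
  · rw [List.take_of_length_le (by simp [steps]; omega), count_U_steps, count_D_steps]

def toDyckWord : DyckWord :=
  ⟨s.steps, s.count_U_steps.trans s.count_D_steps.symm, s.count_D_take_steps_le_count_U⟩

end BallotSet

section Dyck

variable {n : ℕ} {p : DyckWord}

lemma card_downPositions_dropLast (hp : p.semilength = n + 1) :
    #(downPositions p.toList.dropLast) = n := by
  have h := congrArg (List.count D)
    (DyckWord.dropLast_append_D (DyckWord.ne_zero_of_semilength_eq_succ hp))
  rw [List.count_append, ← DyckWord.semilength_eq_count_D, hp,
    count_D_eq_card_downPositions] at h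
  simpa using h

lemma isBallot_downPositions_dropLast (hp : p.semilength = n + 1) :
    IsBallot (downPositions p.toList.dropLast) := by
  intro t
  have hlen := DyckWord.length_dropLast_of_semilength_eq_succ hp
  have h := p.count_D_le_count_U (min t (2 * n + 1))
  rw [← DyckWord.dropLast_append_D (DyckWord.ne_zero_of_semilength_eq_succ hp),
    List.take_append_of_le_length (by omega), ← hlen, ← List.take_eq_take_min, count_U_take,
    count_D_take] at h
  omega

def toBallotSet (hp : p.semilength = n + 1) : BallotSet n :=
  ⟨downPositions p.toList.dropLast,
    DyckWord.length_dropLast_of_semilength_eq_succ hp ▸ downPositions_subset_range _,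
    card_downPositions_dropLast hp, isBallot_downPositions_dropLast hp⟩

def ballotSetEquivDyckWord (n : ℕ) :
    BallotSet n ≃ {p : DyckWord // p.semilength = n + 1} where
  toFun s := ⟨s.toDyckWord, s.count_U_steps⟩
  invFun p := toBallotSet p.2
  left_inv s := Subtype.ext <| by
    simp [toBallotSet, BallotSet.toDyckWord, BallotSet.steps, downPositions_stepsWithDownAt s.2.1]
  right_inv p := Subtype.ext <| DyckWord.ext <| by
    simp only [BallotSet.toDyckWord, BallotSet.steps, toBallotSet]
    rw [← DyckWord.length_dropLast_of_semilength_eq_succ p.2, stepsWithDownAt_downPositions,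
      DyckWord.dropLast_append_D (DyckWord.ne_zero_of_semilength_eq_succ p.2)]

end Dyck

theorem card_admissible (n : ℕ) : Nat.card (Admissible n) = catalan (n + 1) := by
  rw [Nat.card_congr ((admissibleEquivBallotSet n).trans (ballotSetEquivDyckWord n)),
    Nat.card_eq_fintype_card, DyckWord.card_dyckWord_semilength_eq_catalan]

end AdmissibleSequence

theorem card_admissible_eq_catalan_general (m : ℕ) :
    Nat.card {a : Fin (m - 1) → ℕ //
        StrictMono a ∧ ∀ i : Fin (m - 1), 2 * (i : ℕ) + 1 ≤ a i ∧ a i ≤ 2 * (m - 1)}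
      = Nat.choose (2 * m) m / (m + 1) := by
  rcases m with _ | n
  -- for `m = 0` the truncated `m - 1 = 0` makes the left side the count for `m = 1`
  · exact (AdmissibleSequence.card_admissible 0).trans (by simp)
  · exact (AdmissibleSequence.card_admissible n).trans (catalan_eq_centralBinom_div _)

/-- The number of admissible sequences of length `m-1` (strictly increasing integer
sequences `(a_1, …, a_{m-1})` with `2i-1 ≤ a_i ≤ 2(m-1)` for all `i`) is the
Catalan number `C_m = binomial(2m, m)/(m+1)`. -/
theorem card_admissible_eq_catalan (m : ℕ) (hm : 1 ≤ m) :
    Nat.card {a : Fin (m - 1) → ℕ //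
        StrictMono a ∧ ∀ i : Fin (m - 1), 2 * (i : ℕ) + 1 ≤ a i ∧ a i ≤ 2 * (m - 1)}
      = Nat.choose (2 * m) m / (m + 1) :=
  card_admissible_eq_catalan_general m
end

section
/- Let n, r be positive integers with r \le n, let c_1, ..., c_{n+1} be rational functions in q, and for each j let \gamma_{j,1},...,\gamma_{j,n-r} be complex numbers. If b = (b_1,...,b_{n+1}) satisfies \sum_{j=1}^{n+1} c_j ( \prod_{k=1}^{n-r} (1 - \gamma_{j,k} q^i) ) b_j = 0 for n consecutive integer values i = i_0+1, ..., i_0+n, then the same equation holds for every integer i. Moreover, if |q| < 1 then \sum_{j=1}^{n+1} c_j b_j = 0. -/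
/-- Let `n, r` be positive integers with `r ≤ n`, `c_1, …, c_{n+1}` and
`b_1, …, b_{n+1}` scalars, and `γ_{j,1}, …, γ_{j,n-r}` complex numbers. If
`∑_{j=1}^{n+1} c_j (∏_{k=1}^{n-r} (1 - γ_{j,k} q^i)) b_j = 0` holds for the `n`
consecutive integer values `i = i_0+1, …, i_0+n`, then it holds for every integer
`i`; moreover (since `|q| < 1`) also `∑_{j=1}^{n+1} c_j b_j = 0`. -/
theorem x_invariant_solutions (n r : ℕ) (hn : 0 < n) (hr : 0 < r) (hrn : r ≤ n)
    (q : ℂ) (hq0 : q ≠ 0) (hq : ‖q‖ < 1)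
    (c b : Fin (n + 1) → ℂ) (γ : Fin (n + 1) → Fin (n - r) → ℂ) (i0 : ℤ)
    (h : ∀ i ∈ Finset.Icc (i0 + 1) (i0 + n),
      ∑ j, c j * (∏ k, (1 - γ j k * q ^ i)) * b j = 0) :
    (∀ i : ℤ, ∑ j, c j * (∏ k, (1 - γ j k * q ^ i)) * b j = 0) ∧
      ∑ j, c j * b j = 0 := by
  classical
  set P : Polynomial ℂ := ∑ j, Polynomial.C (c j * b j) * ∏ k, (1 - Polynomial.C (γ j k) * Polynomial.X) with hP
  have heval : ∀ x : ℂ, P.eval x = ∑ j, c j * (∏ k, (1 - γ j k * x)) * b j := by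
    intro x
    simp only [hP, Polynomial.eval_finset_sum, Polynomial.eval_mul, Polynomial.eval_prod,
      Polynomial.eval_sub, Polynomial.eval_one, Polynomial.eval_C, Polynomial.eval_X]
    exact Finset.sum_congr rfl fun j _ => by ring
  -- injectivity of i ↦ q ^ i
  have hinj : Function.Injective fun i : ℤ => q ^ i := by
    intro a b hab
    have : ‖q‖ ^ a = ‖q‖ ^ b := by
      simpa [norm_zpow] using congrArg norm hab
    exact zpow_right_injective₀ (norm_pos_iff.2 hq0) hq.ne this
  -- P vanishes on the image of Icc
  have hP0 : P = 0 := by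
    apply P.eq_zero_of_natDegree_lt_card_of_eval_eq_zero'
      ((Finset.Icc (i0 + 1) (i0 + n)).image fun i => q ^ i)
    · intro x hx
      obtain ⟨i, hi, rfl⟩ := Finset.mem_image.1 hx
      rw [heval]; exact h i hi
    · rw [Finset.card_image_of_injective _ hinj, Int.card_Icc]
      rw [show i0 + (n : ℤ) + 1 - (i0 + 1) = (n : ℤ) by ring, Int.toNat_natCast]
      calc P.natDegree ≤ n - r := by
            apply Polynomial.natDegree_sum_le_of_forall_le
            intro j _
            refine (Polynomial.natDegree_C_mul_le _ _).trans ?_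
            refine (Polynomial.natDegree_prod_le _ _).trans ?_
            have : ∀ k : Fin (n - r), (1 - Polynomial.C (γ j k) * Polynomial.X).natDegree ≤ 1 := by
              intro k
              refine (Polynomial.natDegree_sub_le _ _).trans ?_
              simpa using (Polynomial.natDegree_C_mul_le (γ j k) Polynomial.X).trans (by simp)
            have h2 := Finset.sum_le_card_nsmul Finset.univ
              (fun k => (1 - Polynomial.C (γ j k) * Polynomial.X).natDegree) 1 (fun k _ => this k)
            simpa using h2
        _ < n := by omega
  constructor
  · intro i
    rw [← heval, hP0, Polynomial.eval_zero]
  · have := heval 0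
    rw [hP0, Polynomial.eval_zero] at this
    simpa using this.symm
end
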